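/- arXiv:1210.2273 — 2 statements merged into one kernel-verified Lean document; each statement's English description precedes it below -/
import Mathlib

section
/- In any finitely branching pLTS, the intersection of the bisimulation approximants equals bisimilarity: ⋂_{n∈ℕ} ∼ₙ = ∼. -/
open scoped ENNReal

noncomputable section

/-- A probabilistic labelled transition system (pLTS): states `S`, alphabet `A`,
and a transition relation into probability distributions (`PMF`s) on `S`. -/
structure PLTS (S : Type) (A : Type) where
  Tr : S → A → PMF S → Prop

namespace PLTS

variable {S A : Type}

/-- The mass that a distribution assigns to a set of states. -/
def mass (d : PMF S) (E : Set S) : ℝ≥0∞ := ∑' s : E, d s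

/-- Two distributions are `r`-equivalent if they assign equal mass to every
`r`-equivalence class (for an equivalence `r`, the classes are the sets `{t | r s t}`). -/
def REquiv (r : S → S → Prop) (d d' : PMF S) : Prop :=
  ∀ s : S, mass d {t | r s t} = mass d' {t | r s t}

/-- An equivalence relation is a bisimulation if related states can match
each other's transitions with `r`-equivalent target distributions. -/
def IsBisimulation (L : PLTS S A) (r : S → S → Prop) : Prop :=
  Equivalence r ∧
    ∀ s t, r s t → ∀ a d, L.Tr s a d → ∃ d', L.Tr t a d' ∧ REquiv r d d'

/-- Bisimilarity: the union of all bisimulation relations. -/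
def Bisim (L : PLTS S A) (s t : S) : Prop :=
  ∃ r, L.IsBisimulation r ∧ r s t

/-- The bisimulation approximants `∼ₙ`. -/
def approx (L : PLTS S A) : ℕ → S → S → Prop
  | 0 => fun _ _ => True
  | n + 1 => fun s t =>
      (∀ a d, L.Tr s a d → ∃ d', L.Tr t a d' ∧ REquiv (L.approx n) d d') ∧
      (∀ a d', L.Tr t a d' → ∃ d, L.Tr s a d ∧ REquiv (L.approx n) d d')

/-- A pLTS is finitely branching if every state has finitely many transitions. -/
def FinBranching (L : PLTS S A) : Prop :=
  ∀ s, {p : A × PMF S | L.Tr s p.1 p.2}.Finite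

/-- One-step successor relation: `s → s'` iff some transition of `s` gives `s'`
positive probability. -/
def Step (L : PLTS S A) (s s' : S) : Prop :=
  ∃ a d, L.Tr s a d ∧ d s' ≠ 0

end PLTS

/-!
Every bisimulation lies below each `∼ₙ`, by induction on `n`. Conversely `⋂ₙ ∼ₙ` is a
bisimulation. If `s ⋂ₙ∼ₙ t` and `s –a→ d`, then for each `n` some `a`-transition of `t` matches `d`
up to `∼ₙ`; as `t` has finitely many transitions, one `t –a→ d'` does so for infinitely many `n`,
hence for all `n` since the `∼ₙ` decrease. Each `⋂ₙ ∼ₙ`-class is the decreasing intersection of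
the `∼ₙ`-classes, so by continuity of `d` and `d'` from above they also agree on it.
-/

theorem Set.Finite.exists_forall_of_antitone {α : Type*} {s : Set α} (hs : s.Finite)
    {P : ℕ → α → Prop} (hP : ∀ x, Antitone (P · x)) (h : ∀ n, ∃ x ∈ s, P n x) :
    ∃ x ∈ s, ∀ n, P n x := by
  choose f hfs hfP using h
  have : Finite s := hs.to_subtype
  obtain ⟨x, hx⟩ := Finite.exists_infinite_fiber fun n => (⟨f n, hfs n⟩ : s)
  refine ⟨x, x.2, fun m => ?_⟩
  obtain ⟨n, hn, hmn⟩ := (Set.infinite_coe_iff.1 hx).exists_gt m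
  have hfn : f n = x := congrArg Subtype.val hn
  exact hP x hmn.le (hfn ▸ hfP n)

namespace PLTS

variable {S A : Type}

section REquiv

variable {r r' : S → S → Prop} {d d' d'' : PMF S}

theorem REquiv.refl (r : S → S → Prop) (d : PMF S) : REquiv r d d := fun _ => rfl

theorem REquiv.symm (h : REquiv r d d') : REquiv r d' d := fun s => (h s).symm

theorem REquiv.trans (h : REquiv r d d') (h' : REquiv r d' d'') : REquiv r d d'' :=
  fun s => (h s).trans (h' s)

/-- A union of `r`-classes has as mass the sum of the masses of its classes (a sum over the
quotient, which may be uncountable: sums in `ℝ≥0∞` are unconditional). -/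
theorem REquiv.mass_eq_of_saturated (hr : Equivalence r) {E : Set S}
    (hE : ∀ u v, u ∈ E → r u v → v ∈ E) (h : REquiv r d d') : mass d E = mass d' E := by
  let q : S → Quotient (Setoid.mk r hr) := Quotient.mk _
  have hfiber : ∀ u, q ⁻¹' {q u} = {t | r u t} := fun u => by
    ext t
    exact Quotient.eq.trans ⟨hr.symm, hr.symm⟩
  have hclass : ∀ u,
      ∑' t : q ⁻¹' {q u}, E.indicator d t = ∑' t : q ⁻¹' {q u}, E.indicator d' t := by
    intro u
    rw [hfiber]
    by_cases hu : u ∈ E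
    · have hin : ∀ e : PMF S, ∑' t : {t | r u t}, E.indicator e t = mass e {t | r u t} :=
        fun e => tsum_congr fun t => Set.indicator_of_mem (hE u t hu t.2) e
      rw [hin, hin, h u]
    · have hout : ∀ e : PMF S, ∑' t : {t | r u t}, E.indicator e t = 0 := fun e =>
        ENNReal.tsum_eq_zero.2 fun t =>
          Set.indicator_of_notMem (fun ht => hu (hE t u ht (hr.symm t.2))) e
      rw [hout, hout]
  simp only [mass, tsum_subtype E, ← ENNReal.tsum_fiberwise _ q]
  refine tsum_congr fun c => ?_
  induction c using Quotient.ind with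
  | _ u => exact hclass u

theorem REquiv.mono (hr : Equivalence r) (htrans : ∀ {a b c}, r' a b → r' b c → r' a c)
    (hle : r ≤ r') (h : REquiv r d d') : REquiv r' d d' := fun _ =>
  h.mass_eq_of_saturated hr fun _ _ hu huv => htrans hu (hle _ _ huv)

end REquiv

theorem mass_iInter_of_antitone (d : PMF S) {E : ℕ → Set S} (hE : Antitone E) :
    mass d (⋂ n, E n) = ⨅ n, mass d (E n) := by
  let _ : MeasurableSpace S := ⊤
  have hmass : ∀ F : Set S, mass d F = d.toMeasure F := fun F => by
    rw [PMF.toMeasure_apply d MeasurableSpace.measurableSet_top]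
    exact tsum_subtype F d
  simp only [hmass]
  exact hE.measure_iInter (fun _ => MeasurableSpace.measurableSet_top.nullMeasurableSet)
    ⟨0, MeasureTheory.measure_ne_top _ _⟩

variable (L : PLTS S A)

theorem approx_equivalence : ∀ n, Equivalence (L.approx n)
  | 0 => ⟨fun _ => trivial, fun _ => trivial, fun _ _ => trivial⟩
  | _ + 1 =>
    { refl := fun _ =>
        ⟨fun _ d hd => ⟨d, hd, .refl _ _⟩, fun _ d hd => ⟨d, hd, .refl _ _⟩⟩
      symm := fun ⟨forth, back⟩ =>
        ⟨fun a d hd => let ⟨d', hd', he⟩ := back a d hd; ⟨d', hd', he.symm⟩,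
          fun a d hd => let ⟨d', hd', he⟩ := forth a d hd; ⟨d', hd', he.symm⟩⟩
      trans := fun ⟨forth₁, back₁⟩ ⟨forth₂, back₂⟩ =>
        ⟨fun a d hd =>
            let ⟨d', hd', he⟩ := forth₁ a d hd
            let ⟨d'', hd'', he'⟩ := forth₂ a d' hd'
            ⟨d'', hd'', he.trans he'⟩,
          fun a d hd =>
            let ⟨d', hd', he⟩ := back₂ a d hd
            let ⟨d'', hd'', he'⟩ := back₁ a d' hd'
            ⟨d'', hd'', he'.trans he⟩⟩ }

theorem le_approx_succ {r q : S → S → Prop} {n : ℕ} (hq : Equivalence q) (hle : q ≤ L.approx n)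
    (hr : ∀ s t, r s t →
      (∀ a d, L.Tr s a d → ∃ d', L.Tr t a d' ∧ REquiv q d d') ∧
      (∀ a d', L.Tr t a d' → ∃ d, L.Tr s a d ∧ REquiv q d d')) :
    r ≤ L.approx (n + 1) := fun s t hst =>
  have coarsen {d d'} (he : REquiv q d d') : REquiv (L.approx n) d d' :=
    he.mono hq (L.approx_equivalence n).trans hle
  ⟨fun a d hd => let ⟨d', hd', he⟩ := (hr s t hst).1 a d hd; ⟨d', hd', coarsen he⟩,
    fun a d hd => let ⟨d', hd', he⟩ := (hr s t hst).2 a d hd; ⟨d', hd', coarsen he⟩⟩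

theorem approx_antitone : Antitone L.approx := by
  refine antitone_nat_of_succ_le fun n => ?_
  induction n with
  | zero => exact fun _ _ _ => trivial
  | succ n ih => exact L.le_approx_succ (L.approx_equivalence (n + 1)) ih fun _ _ hst => hst

theorem IsBisimulation.le_approx {L : PLTS S A} {r : S → S → Prop} (h : L.IsBisimulation r) :
    ∀ n, r ≤ L.approx n
  | 0 => fun _ _ _ => trivial
  | n + 1 => L.le_approx_succ h.1 (h.le_approx n) fun s t hst =>
    ⟨h.2 s t hst, fun a d' hd' =>
      let ⟨d, hd, he⟩ := h.2 t s (h.1.symm hst) a d' hd'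
      ⟨d, hd, he.symm⟩⟩

def approxInter (s t : S) : Prop := ∀ n, L.approx n s t

theorem approxInter_equivalence : Equivalence L.approxInter where
  refl s n := (L.approx_equivalence n).refl s
  symm h n := (L.approx_equivalence n).symm (h n)
  trans h h' n := (L.approx_equivalence n).trans (h n) (h' n)

theorem REquiv.approxInter_of_forall {d d' : PMF S} (h : ∀ n, REquiv (L.approx n) d d') :
    REquiv L.approxInter d d' := fun u => by
  have hclass : {t | L.approxInter u t} = ⋂ n, {t | L.approx n u t} :=
    Set.ext fun _ => Set.mem_iInter.symm
  have hanti : Antitone fun n => {t | L.approx n u t} :=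
    fun _ _ hmn t ht => L.approx_antitone hmn u t ht
  simp only [hclass, mass_iInter_of_antitone _ hanti, h _ u]

theorem isBisimulation_approxInter (hfb : L.FinBranching) : L.IsBisimulation L.approxInter := by
  refine ⟨L.approxInter_equivalence, fun s t hst a d hd => ?_⟩
  have hfin : {d' | L.Tr t a d'}.Finite :=
    ((hfb t).image Prod.snd).subset fun d' hd' => ⟨(a, d'), hd', rfl⟩
  have hanti : ∀ d', Antitone fun n => REquiv (L.approx n) d d' := fun d' _ n hmn he =>
    he.mono (L.approx_equivalence n) (L.approx_equivalence _).trans (L.approx_antitone hmn)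
  obtain ⟨d', hd', he⟩ := hfin.exists_forall_of_antitone hanti fun n => (hst (n + 1)).1 a d hd
  exact ⟨d', hd', REquiv.approxInter_of_forall L he⟩

end PLTS

theorem iInter_approx_eq_bisim_general (S A : Type)
    (L : PLTS S A) (hfb : L.FinBranching) :
    ∀ s t : S, (∀ n : ℕ, L.approx n s t) ↔ L.Bisim s t :=
  fun s t => ⟨fun h => ⟨L.approxInter, L.isBisimulation_approxInter hfb, h⟩,
    fun ⟨_, hr, hst⟩ n => hr.le_approx n s t hst⟩

/-- In any finitely branching pLTS, the intersection of the
bisimulation approximants equals bisimilarity: `⋂ₙ ∼ₙ = ∼`. -/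
theorem iInter_approx_eq_bisim (S A : Type) [Countable S]
    (L : PLTS S A) (hfb : L.FinBranching) :
    ∀ s t : S, (∀ n : ℕ, L.approx n s t) ↔ L.Bisim s t :=
  iInter_approx_eq_bisim_general S A L hfb
end
end

section
/- In any finitely branching pLTS with exactly k ≥ 1 states, the bisimulation approximants stabilize at level k−1: ∼_{k−1} = ∼_k = ∼. -/
open scoped ENNReal

noncomputable section

section Aux

open Classical

variable {S A : Type}

/-- `mass` over a finite state space is a finite sum. -/
lemma mass_eq_sum [Fintype S] (d : PMF S) (E : Set S) :
    PLTS.mass d E = ∑ t ∈ Finset.univ.filter (fun t => t ∈ E), d t := by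
  classical
  haveI : Fintype E := Fintype.ofFinite _
  rw [PLTS.mass, tsum_fintype]
  exact (Finset.sum_subtype _ (by simp) d).symm

/-- Monotonicity of `REquiv` along refinement of equivalences. -/
lemma REquiv_mono [Fintype S] {r r' : S → S → Prop} (hr : Equivalence r)
    (hr' : Equivalence r') (hsub : ∀ a b, r' a b → r a b) {d d' : PMF S}
    (h : PLTS.REquiv r' d d') : PLTS.REquiv r d d' := by
  classical
  intro s0
  rw [mass_eq_sum, mass_eq_sum]
  set st : Setoid S := ⟨r', hr'⟩ with hst
  haveI : Finite (Quotient st) := Quotient.finite st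
  haveI : Fintype (Quotient st) := Fintype.ofFinite _
  rw [← Finset.sum_fiberwise (Finset.univ.filter (fun t => t ∈ {t | r s0 t}))
    (fun t => (Quotient.mk st t)) d,
    ← Finset.sum_fiberwise (Finset.univ.filter (fun t => t ∈ {t | r s0 t}))
    (fun t => (Quotient.mk st t)) d']
  apply Finset.sum_congr rfl
  intro q _
  induction q using Quotient.ind with
  | _ u =>
    by_cases hu : r s0 u
    · have hset : ((Finset.univ.filter (fun t => t ∈ {t | r s0 t})).filter
        (fun t => Quotient.mk st t = Quotient.mk st u)) =
        Finset.univ.filter (fun t => t ∈ {t | r' u t}) := by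
        ext t
        simp only [Finset.mem_filter, Finset.mem_univ, true_and, Set.mem_setOf_eq]
        constructor
        · rintro ⟨_, hq⟩
          exact hr'.symm (Quotient.exact hq)
        · intro hrt
          refine ⟨hr.trans hu (hsub _ _ hrt), Quotient.sound (hr'.symm hrt)⟩
      rw [hset]
      have := h u
      rw [mass_eq_sum, mass_eq_sum] at this
      exact this
    · have hset : ((Finset.univ.filter (fun t => t ∈ {t | r s0 t})).filter
        (fun t => Quotient.mk st t = Quotient.mk st u)) = ∅ := by
        ext t
        simp only [Finset.mem_filter, Finset.mem_univ, true_and, Set.mem_setOf_eq,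
          Finset.notMem_empty, iff_false]
        rintro ⟨ht, hq⟩
        exact hu (hr.trans ht (hsub _ _ (Quotient.exact hq)))
      rw [hset]; simp

/-- `REquiv` respects pointwise equivalence of relations. -/
lemma REquiv_congr {r r' : S → S → Prop} (hrr : ∀ a b, r a b ↔ r' a b)
    {d d' : PMF S} (h : PLTS.REquiv r d d') : PLTS.REquiv r' d d' := by
  intro s
  have : {t | r' s t} = {t | r s t} := by ext t; exact (hrr s t).symm
  rw [this]; exact h s

/-- Each approximant is an equivalence relation. -/
lemma approx_equiv (L : PLTS S A) : ∀ n, Equivalence (L.approx n) := by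
  intro n
  cases n with
  | zero => exact ⟨fun _ => trivial, fun _ => trivial, fun _ _ => trivial⟩
  | succ m =>
    constructor
    · intro s
      refine ⟨fun a d hd => ⟨d, hd, fun _ => rfl⟩, fun a d hd => ⟨d, hd, fun _ => rfl⟩⟩
    · rintro s t ⟨h1, h2⟩
      exact ⟨fun a d hd => (h2 a d hd).imp (fun d' hd' => ⟨hd'.1, fun u => (hd'.2 u).symm⟩),
             fun a d hd => (h1 a d hd).imp (fun d' hd' => ⟨hd'.1, fun u => (hd'.2 u).symm⟩)⟩
    · rintro s t u ⟨h1, h2⟩ ⟨h3, h4⟩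
      constructor
      · intro a d hd
        obtain ⟨d1, hd1, he1⟩ := h1 a d hd
        obtain ⟨d2, hd2, he2⟩ := h3 a d1 hd1
        exact ⟨d2, hd2, fun v => (he1 v).trans (he2 v)⟩
      · intro a d hd
        obtain ⟨d1, hd1, he1⟩ := h4 a d hd
        obtain ⟨d2, hd2, he2⟩ := h2 a d1 hd1
        exact ⟨d2, hd2, fun v => (he2 v).trans (he1 v)⟩

/-- Approximants are decreasing. -/
lemma approx_succ_imp [Fintype S] (L : PLTS S A) :
    ∀ n s t, L.approx (n + 1) s t → L.approx n s t := by
  intro n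
  induction n with
  | zero => intro s t _; trivial
  | succ m ih =>
    rintro s t ⟨h1, h2⟩
    constructor
    · intro a d hd
      obtain ⟨d', hd', he⟩ := h1 a d hd
      exact ⟨d', hd', REquiv_mono (approx_equiv L m) (approx_equiv L (m + 1))
        (fun a b => ih a b) he⟩
    · intro a d hd
      obtain ⟨d', hd', he⟩ := h2 a d hd
      exact ⟨d', hd', REquiv_mono (approx_equiv L m) (approx_equiv L (m + 1))
        (fun a b => ih a b) he⟩

lemma approx_le [Fintype S] (L : PLTS S A) {m n : ℕ} (hmn : m ≤ n) :
    ∀ s t, L.approx n s t → L.approx m s t := by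
  induction hmn with
  | refl => exact fun s t h => h
  | step _ ih => exact fun s t h => ih s t (approx_succ_imp L _ s t h)

/-- If two consecutive approximants coincide, so do the next two. -/
lemma stable_succ (L : PLTS S A) {n : ℕ}
    (h : ∀ s t, L.approx n s t ↔ L.approx (n + 1) s t) :
    ∀ s t, L.approx (n + 1) s t ↔ L.approx (n + 2) s t := by
  intro s t
  constructor
  · rintro ⟨h1, h2⟩
    exact ⟨fun a d hd => (h1 a d hd).imp (fun d' hd' => ⟨hd'.1, REquiv_congr h hd'.2⟩),
           fun a d hd => (h2 a d hd).imp (fun d' hd' => ⟨hd'.1, REquiv_congr h hd'.2⟩)⟩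
  · rintro ⟨h1, h2⟩
    exact ⟨fun a d hd => (h1 a d hd).imp
        (fun d' hd' => ⟨hd'.1, REquiv_congr (fun a b => (h a b).symm) hd'.2⟩),
      fun a d hd => (h2 a d hd).imp
        (fun d' hd' => ⟨hd'.1, REquiv_congr (fun a b => (h a b).symm) hd'.2⟩)⟩

lemma stable_ge (L : PLTS S A) {n : ℕ}
    (h : ∀ s t, L.approx n s t ↔ L.approx (n + 1) s t) :
    ∀ m, n ≤ m → ∀ s t, L.approx n s t ↔ L.approx m s t := by
  intro m hm
  induction hm with
  | refl => exact fun s t => Iff.rfl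
  | @step p hp ih =>
    have hstab : ∀ q, n ≤ q → ∀ s t, L.approx q s t ↔ L.approx (q + 1) s t := by
      intro q hq
      induction hq with
      | refl => exact h
      | step _ ih2 => exact stable_succ L ih2
    exact fun s t => (ih s t).trans (hstab p hp s t)

/-- Strict refinement strictly increases the number of equivalence classes. -/
lemma quot_card_lt [Fintype S] {r r' : S → S → Prop} (hr : Equivalence r)
    (hr' : Equivalence r') (hsub : ∀ a b, r' a b → r a b)
    (hne : ¬ ∀ a b, r a b ↔ r' a b) :
    Nat.card (Quotient (⟨r, hr⟩ : Setoid S)) <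
      Nat.card (Quotient (⟨r', hr'⟩ : Setoid S)) := by
  classical
  set s1 : Setoid S := ⟨r, hr⟩
  set s2 : Setoid S := ⟨r', hr'⟩
  haveI : Finite (Quotient s1) := Quotient.finite s1
  haveI : Finite (Quotient s2) := Quotient.finite s2
  let f : Quotient s2 → Quotient s1 :=
    Quotient.lift (Quotient.mk s1) (fun a b h => Quotient.sound (hsub a b h))
  have hsurj : Function.Surjective f := by
    intro q; induction q using Quotient.ind with
    | _ a => exact ⟨Quotient.mk s2 a, rfl⟩
  have hle : Nat.card (Quotient s1) ≤ Nat.card (Quotient s2) :=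
    Nat.card_le_card_of_surjective f hsurj
  rcases lt_or_eq_of_le hle with hlt | heq
  · exact hlt
  · exfalso
    have hbij : Function.Bijective f :=
      (Nat.bijective_iff_surjective_and_card f).2 ⟨hsurj, heq.symm⟩
    apply hne
    intro a b
    refine ⟨fun hab => ?_, hsub a b⟩
    have : f (Quotient.mk s2 a) = f (Quotient.mk s2 b) := Quotient.sound hab
    exact Quotient.exact (hbij.1 this)

/-- Bisimilarity implies every approximant. -/
lemma bisim_imp_approx [Fintype S] (L : PLTS S A) :
    ∀ n s t, L.Bisim s t → L.approx n s t := by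
  intro n
  induction n with
  | zero => intro s t _; trivial
  | succ m ih =>
    rintro s t ⟨r, ⟨hre, hmatch⟩, hrst⟩
    have hsubr : ∀ a b, r a b → L.approx m a b := fun a b hab =>
      ih a b ⟨r, ⟨hre, hmatch⟩, hab⟩
    constructor
    · intro a d hd
      obtain ⟨d', hd', he⟩ := hmatch s t hrst a d hd
      exact ⟨d', hd', REquiv_mono (approx_equiv L m) hre hsubr he⟩
    · intro a d hd
      obtain ⟨d', hd', he⟩ := hmatch t s (hre.symm hrst) a d hd
      refine ⟨d', hd', fun u => (REquiv_mono (approx_equiv L m) hre hsubr he u).symm⟩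

end Aux

/-- In any finitely branching pLTS with exactly `k ≥ 1`
states, the approximants stabilize at level `k − 1`:
`∼_{k−1} = ∼_k = ∼`. -/
theorem approx_stabilizes (S A : Type) [Fintype S] (L : PLTS S A)
    (k : ℕ) (hk : 1 ≤ k) (hcard : Fintype.card S = k)
    (hfb : L.FinBranching) :
    (∀ s t : S, L.approx (k - 1) s t ↔ L.approx k s t) ∧
    (∀ s t : S, L.approx k s t ↔ L.Bisim s t) := by
  classical
  have hkk : k - 1 + 1 = k := Nat.succ_pred_eq_of_pos hk
  have key : ∀ s t : S, L.approx (k - 1) s t ↔ L.approx (k - 1 + 1) s t := by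
    by_contra hne
    have hstrict : ∀ m, m ≤ k - 1 →
        ¬ ∀ s t, L.approx m s t ↔ L.approx (m + 1) s t := by
      intro m hm hstab
      exact hne fun s t =>
        ((stable_ge L hstab (k - 1) hm s t).symm).trans
          (stable_ge L hstab (k - 1 + 1) (le_trans hm (Nat.le_succ _)) s t)
    let st : ℕ → Setoid S := fun n => ⟨L.approx n, approx_equiv L n⟩
    haveI : ∀ n, Finite (Quotient (st n)) := fun n => Quotient.finite _
    have hgrow : ∀ n, n ≤ k → n < Nat.card (Quotient (st n)) := by
      intro n
      induction n with
      | zero =>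
        intro _
        haveI : Nonempty S := by
          rw [← Fintype.card_pos_iff, hcard]; omega
        haveI : Nonempty (Quotient (st 0)) := ⟨Quotient.mk _ (Classical.arbitrary S)⟩
        exact Nat.card_pos
      | succ m ih =>
        intro hmk
        have h1 := ih (le_trans (Nat.le_succ m) hmk)
        have h2 := quot_card_lt (approx_equiv L m) (approx_equiv L (m + 1))
          (approx_succ_imp L m) (hstrict m (by omega))
        exact lt_of_le_of_lt h1 h2
    have hub : Nat.card (Quotient (st k)) ≤ k := by
      calc Nat.card (Quotient (st k)) ≤ Nat.card S :=
            Nat.card_le_card_of_surjective (Quotient.mk (st k)) Quotient.mk_surjective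
        _ = k := by rw [Nat.card_eq_fintype_card, hcard]
    exact absurd (hgrow k le_rfl) (not_lt.2 hub)
  have key' : ∀ s t : S, L.approx (k - 1) s t ↔ L.approx k s t := by
    rw [← hkk]; exact key
  refine ⟨key', fun s t => ⟨fun h => ?_, fun h => bisim_imp_approx L k s t h⟩⟩
  refine ⟨L.approx k, ⟨approx_equiv L k, ?_⟩, h⟩
  intro s' t' hst a d hd
  have hstab : ∀ u v, L.approx k u v ↔ L.approx (k + 1) u v := by
    rw [← hkk]; exact stable_succ L key
  obtain ⟨h1, _⟩ := (hstab s' t').1 hst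
  exact h1 a d hd
end
end
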